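/- arXiv:2107.04679 — 7 statements merged into one kernel-verified Lean document; each statement's English description precedes it below -/
import Mathlib

section
/- A minimal incomplete game (N, K_min, v) admits at least one 1-convex extension if and only if its total excess Δ := v(N) − Σ_{i∈N} v({i}) is nonnegative. -/
noncomputable section

open Finset

/-- The upper (utopia) vector `b^w` of a cooperative game `w` on `N = {1,…,n}`. -/
def bvec (n : ℕ) (w : Finset (Fin n) → ℝ) (i : Fin n) : ℝ :=
  w Finset.univ - w (Finset.univ \ {i})

/-- A cooperative game `w` is 1-convex: for every nonempty coalition `S`,
`w S ≤ w N - b^w(N \ S)`, and `b^w(N) ≥ w N`. -/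
def OneConvex (n : ℕ) (w : Finset (Fin n) → ℝ) : Prop :=
  (∀ S : Finset (Fin n), S.Nonempty →
      w S ≤ w Finset.univ - ∑ i ∈ Finset.univ \ S, bvec n w i) ∧
  w Finset.univ ≤ ∑ i : Fin n, bvec n w i

/-- The set of 1-convex extensions of an incomplete game `(N, K, v)`:
cooperative games (`w ∅ = 0`) that are 1-convex and agree with `v` on `K`. -/
def Cext (n : ℕ) (K : Finset (Finset (Fin n))) (v : Finset (Fin n) → ℝ) :
    Set (Finset (Fin n) → ℝ) :=
  {w | w ∅ = 0 ∧ OneConvex n w ∧ ∀ S ∈ K, w S = v S}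

/-- `K_min`: the empty coalition, the grand coalition and all singletons. -/
def KminF (n : ℕ) : Finset (Finset (Fin n)) :=
  {∅, Finset.univ} ∪ Finset.univ.image (fun i => ({i} : Finset (Fin n)))

/-- The total excess `Δ = v(N) - ∑_{i ∈ N} v({i})`. -/
def totalExcess (n : ℕ) (v : Finset (Fin n) → ℝ) : ℝ :=
  v Finset.univ - ∑ i : Fin n, v {i}

/-- A minimal incomplete game (only the values on `K_min` are relevant) that is
1-convex-extendable, i.e. `v ∅ = 0` and `Δ ≥ 0`. -/
def MinExtendable (n : ℕ) (v : Finset (Fin n) → ℝ) : Prop :=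
  v ∅ = 0 ∧ 0 ≤ totalExcess n v

/-- The extreme games `v^i` of the set of 1-convex extensions of a minimal
incomplete game. -/
def extGame (n : ℕ) (v : Finset (Fin n) → ℝ) (i : Fin n) (S : Finset (Fin n)) : ℝ :=
  if S ∈ KminF n then v S
  else if i ∈ S then v Finset.univ - ∑ j ∈ Finset.univ \ S, v {j}
  else v Finset.univ - ∑ j ∈ Finset.univ \ S, v {j} - totalExcess n v

/-- The upper game of the set of 1-convex extensions of a minimal incomplete game. -/
def upperGameMin (n : ℕ) (v : Finset (Fin n) → ℝ) (S : Finset (Fin n)) : ℝ :=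
  if S ∈ KminF n then v S else v Finset.univ - ∑ i ∈ Finset.univ \ S, v {i}

/-- The index set `E = 2^N \ ({∅, N} ∪ {{i}} ∪ {N \ {i}})` of extreme rays. -/
def ESetMin (n : ℕ) : Finset (Finset (Fin n)) :=
  Finset.univ \
    (KminF n ∪ Finset.univ.image (fun i => Finset.univ \ ({i} : Finset (Fin n))))

/-- The extreme-ray game `e_T`: value `-1` on `T` and `0` elsewhere. -/
def eRay (n : ℕ) (T S : Finset (Fin n)) : ℝ := if S = T then -1 else 0

/-- The centre of gravity `ṽ = (1/n) ∑_i v^i` of the extreme games. -/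
def tildeV (n : ℕ) (v : Finset (Fin n) → ℝ) (S : Finset (Fin n)) : ℝ :=
  (∑ i : Fin n, extGame n v i S) / (n : ℝ)

/-- The centre of gravity `ẽ = (1/|E|) ∑_{T ∈ E} e_T` of the extreme rays
(minimal incomplete case). -/
def tildeEMin (n : ℕ) (S : Finset (Fin n)) : ℝ :=
  (∑ T ∈ ESetMin n, eRay n T S) / ((ESetMin n).card : ℝ)

/-- The gap function `g^w(S) = b^w(S) - w(S)`. -/
def gapF (n : ℕ) (w : Finset (Fin n) → ℝ) (S : Finset (Fin n)) : ℝ :=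
  (∑ i ∈ S, bvec n w i) - w S

/-- The τ-value of a 1-convex game: `τ_i(w) = b^w_i - g^w(N)/n`. -/
def tauVal (n : ℕ) (w : Finset (Fin n) → ℝ) (i : Fin n) : ℝ :=
  bvec n w i - gapF n w Finset.univ / (n : ℝ)

/-- The Shapley value. -/
def shapley (n : ℕ) (w : Finset (Fin n) → ℝ) (i : Fin n) : ℝ :=
  ∑ S ∈ Finset.univ.filter (fun S : Finset (Fin n) => i ∈ S),
    ((Nat.factorial (S.card - 1) * Nat.factorial (n - S.card) : ℕ) : ℝ) /
        (Nat.factorial n : ℝ) * (w S - w (S \ {i}))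

/-- The concession vector `λ^w_i = min_{S ∋ i} g^w(S)`. -/
def concession (n : ℕ) (w : Finset (Fin n) → ℝ) (i : Fin n) : ℝ :=
  (Finset.univ.filter (fun S : Finset (Fin n) => i ∈ S)).inf'
    ⟨{i}, by simp⟩ (gapF n w)

/-- The minimal right vector `a^w = b^w - λ^w`. -/
def minRight (n : ℕ) (w : Finset (Fin n) → ℝ) (i : Fin n) : ℝ :=
  bvec n w i - concession n w i

/-- The average value `ζ̃_i(v) = v({i}) + Δ/n` of a minimal incomplete game. -/
def avgValue (n : ℕ) (v : Finset (Fin n) → ℝ) (i : Fin n) : ℝ :=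
  v {i} + totalExcess n v / (n : ℝ)

/-- The zero-normalised game of a minimal incomplete game: value `Δ` on the
grand coalition and `0` on all other coalitions. -/
def zeroNorm (n : ℕ) (v : Finset (Fin n) → ℝ) (S : Finset (Fin n)) : ℝ :=
  if S = Finset.univ then totalExcess n v else 0

/-- The upper game `v̄` for incomplete games with defined upper vector. -/
def upperGameK (n : ℕ) (K : Finset (Finset (Fin n))) (v : Finset (Fin n) → ℝ)
    (S : Finset (Fin n)) : ℝ :=
  if S ∈ K then v S else v Finset.univ - ∑ i ∈ Finset.univ \ S, bvec n v i

/-- The centre of gravity `ẽ = (1/|E|) ∑_{T ∉ K} e_T` of the extreme rays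
(defined upper vector case), where `E = 2^N \ K`. -/
def tildeEK (n : ℕ) (K : Finset (Finset (Fin n))) (S : Finset (Fin n)) : ℝ :=
  (∑ T ∈ Finset.univ \ K, eRay n T S) / (((Finset.univ \ K).card : ℝ))


namespace Stmt0Aux

lemma mem_KminF {n : ℕ} {S : Finset (Fin n)} :
    S ∈ KminF n ↔ S = ∅ ∨ S = Finset.univ ∨ ∃ i, S = {i} := by
  simp only [KminF, Finset.mem_union, Finset.mem_insert, Finset.mem_singleton,
    Finset.mem_image, Finset.mem_univ, true_and]
  constructor
  · rintro ((rfl | rfl) | ⟨i, rfl⟩)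
    · exact Or.inl rfl
    · exact Or.inr (Or.inl rfl)
    · exact Or.inr (Or.inr ⟨i, rfl⟩)
  · rintro (rfl | rfl | ⟨i, rfl⟩)
    · exact Or.inl (Or.inl rfl)
    · exact Or.inl (Or.inr rfl)
    · exact Or.inr ⟨i, rfl⟩

/-- The per-player surplus `Δ/(n-1)` (junk value `0` when `n = 1`). -/
def c (n : ℕ) (v : Finset (Fin n) → ℝ) : ℝ := totalExcess n v / ((n : ℝ) - 1)

/-- The explicit 1-convex extension. -/
def W (n : ℕ) (v : Finset (Fin n) → ℝ) (S : Finset (Fin n)) : ℝ :=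
  if S.card ≤ 1 then v S
  else v Finset.univ - ∑ j ∈ Finset.univ \ S, (v {j} + c n v)

lemma W_univ (n : ℕ) (v : Finset (Fin n) → ℝ) : W n v Finset.univ = v Finset.univ := by
  unfold W; split <;> simp

lemma W_compl (n : ℕ) (v : Finset (Fin n) → ℝ) (hv : v ∅ = 0) (j : Fin n) :
    W n v (Finset.univ \ {j}) = v Finset.univ - (v {j} + c n v) := by
  have hn : 1 ≤ n := j.pos
  rcases eq_or_ne n 1 with h1 | h1
  · subst h1
    have hj : j = 0 := Subsingleton.elim _ _
    subst hj
    have e1 : (Finset.univ \ {(0 : Fin 1)}) = ∅ := by decide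
    have e2 : (Finset.univ : Finset (Fin 1)) = {0} := by decide
    simp [W, e1, e2, hv, c]
  rcases eq_or_ne n 2 with h2 | h2
  · subst h2
    fin_cases j
    · show W 2 v (Finset.univ \ {(0 : Fin 2)}) = v Finset.univ - (v {(0 : Fin 2)} + c 2 v)
      have e1 : (Finset.univ \ {(0 : Fin 2)}) = {1} := by decide
      have e2 : W 2 v (Finset.univ \ {(0 : Fin 2)}) = v {1} := by
        rw [e1]; simp [W]
      rw [e2, c, totalExcess, Fin.sum_univ_two]
      norm_num
      ring
    · show W 2 v (Finset.univ \ {(1 : Fin 2)}) = v Finset.univ - (v {(1 : Fin 2)} + c 2 v)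
      have e1 : (Finset.univ \ {(1 : Fin 2)}) = {0} := by decide
      have e2 : W 2 v (Finset.univ \ {(1 : Fin 2)}) = v {0} := by
        rw [e1]; simp [W]
      rw [e2, c, totalExcess, Fin.sum_univ_two]
      norm_num
      ring
  · have h3 : 3 ≤ n := by omega
    have hcard : (Finset.univ \ {j}).card = n - 1 := by
      rw [Finset.card_sdiff_of_subset (Finset.subset_univ _)]
      simp
    have hss : Finset.univ \ (Finset.univ \ {j}) = {j} := by
      rw [Finset.sdiff_sdiff_self_left, Finset.univ_inter]
    rw [W, hcard, if_neg (by omega), hss, Finset.sum_singleton]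

lemma bvec_W (n : ℕ) (v : Finset (Fin n) → ℝ) (hv : v ∅ = 0) (j : Fin n) :
    bvec n (W n v) j = v {j} + c n v := by
  unfold bvec
  rw [W_univ, W_compl n v hv j]; ring

lemma sum_vc (n : ℕ) (v : Finset (Fin n) → ℝ) :
    ∑ j : Fin n, (v {j} + c n v) = (v Finset.univ - totalExcess n v) + n * c n v := by
  rw [Finset.sum_add_distrib, Finset.sum_const, Finset.card_univ, Fintype.card_fin,
    nsmul_eq_mul]
  unfold totalExcess; ring

lemma key2 (n : ℕ) (v : Finset (Fin n) → ℝ) (hv : v ∅ = 0)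
    (hΔ : 0 ≤ totalExcess n v) : totalExcess n v ≤ (n : ℝ) * c n v := by
  rcases n with _ | _ | k
  · have h0 : totalExcess 0 v = 0 := by simp [totalExcess, hv]
    simp [h0]
  · have h0 : totalExcess 1 v = 0 := by
      have : (Finset.univ : Finset (Fin 1)) = {0} := by decide
      simp [totalExcess, this]
    simp [h0, c]
  · unfold c
    have hd : (0:ℝ) < ((k+2:ℕ):ℝ) - 1 := by
      push_cast
      have : (0:ℝ) ≤ (k:ℝ) := Nat.cast_nonneg k
      linarith
    rw [← mul_div_assoc, le_div_iff₀ hd]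
    push_cast
    nlinarith [Nat.cast_nonneg (α := ℝ) k]

end Stmt0Aux

/-- A minimal incomplete game admits a 1-convex extension iff its
total excess `Δ = v(N) - ∑ v({i})` is nonnegative. -/
theorem stmt_0 (n : ℕ) (v : Finset (Fin n) → ℝ) (hv : v ∅ = 0) :
    (Cext n (KminF n) v).Nonempty ↔ 0 ≤ totalExcess n v := by
  open Stmt0Aux in
  constructor
  · rintro ⟨w, hw0, ⟨hc1, hc2⟩, hK⟩
    have hN : w Finset.univ = v Finset.univ :=
      hK _ (Stmt0Aux.mem_KminF.mpr (Or.inr (Or.inl rfl)))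
    have hi : ∀ i : Fin n, w {i} = v {i} := fun i =>
      hK _ (Stmt0Aux.mem_KminF.mpr (Or.inr (Or.inr ⟨i, rfl⟩)))
    rcases Nat.eq_zero_or_pos n with rfl | hpos
    · simp [totalExcess, hv]
    · set B := ∑ j : Fin n, bvec n w j with hB
      have key : ∀ i : Fin n, v {i} ≤ v Finset.univ - B + bvec n w i := by
        intro i
        have h := hc1 {i} ⟨i, Finset.mem_singleton_self i⟩
        rw [hi i, hN] at h
        have hsub : ∑ j ∈ Finset.univ \ {i}, bvec n w j = B - bvec n w i := by
          rw [Finset.sum_sdiff_eq_sub (Finset.subset_univ _), Finset.sum_singleton]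
        rw [hsub] at h
        linarith
      have hsum : ∑ i : Fin n, v {i} ≤ ∑ i : Fin n, (v Finset.univ - B + bvec n w i) :=
        Finset.sum_le_sum fun i _ => key i
      have hrhs : ∑ i : Fin n, (v Finset.univ - B + bvec n w i)
          = n * (v Finset.univ - B) + B := by
        rw [Finset.sum_add_distrib, Finset.sum_const, Finset.card_univ, Fintype.card_fin,
          nsmul_eq_mul, ← hB]
      have hB2 : v Finset.univ ≤ B := by rw [← hN]; exact hc2
      have hn1 : (1:ℝ) ≤ (n:ℝ) := by exact_mod_cast hpos
      rw [hrhs] at hsum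
      unfold totalExcess
      nlinarith [mul_nonneg (by linarith : (0:ℝ) ≤ (n:ℝ) - 1) (by linarith : (0:ℝ) ≤ B - v Finset.univ)]
  · intro hΔ
    refine ⟨Stmt0Aux.W n v, ?_, ⟨?_, ?_⟩, ?_⟩
    · simp [Stmt0Aux.W, hv]
    · intro S hS
      rw [Stmt0Aux.W_univ,
        Finset.sum_congr rfl (fun j _ => Stmt0Aux.bvec_W n v hv j)]
      unfold Stmt0Aux.W
      split_ifs with h
      · obtain ⟨i, rfl⟩ := Finset.card_eq_one.mp (le_antisymm h hS.card_pos)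
        have hsub : ∑ j ∈ Finset.univ \ {i}, (v {j} + Stmt0Aux.c n v)
            = (∑ j : Fin n, (v {j} + Stmt0Aux.c n v)) - (v {i} + Stmt0Aux.c n v) := by
          rw [Finset.sum_sdiff_eq_sub (Finset.subset_univ _), Finset.sum_singleton]
        rw [hsub, Stmt0Aux.sum_vc]
        have hc : ((n:ℝ) - 1) * Stmt0Aux.c n v ≤ totalExcess n v := by
          unfold Stmt0Aux.c
          rcases eq_or_ne ((n:ℝ) - 1) 0 with h0 | h0
          · rw [h0, zero_mul]; exact hΔ
          · rw [mul_div_cancel₀ _ h0]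
        nlinarith [hc]
      · exact le_rfl
    · rw [Stmt0Aux.W_univ,
        Finset.sum_congr rfl (fun j _ => Stmt0Aux.bvec_W n v hv j),
        Stmt0Aux.sum_vc]
      have := Stmt0Aux.key2 n v hv hΔ
      linarith
    · intro S hS
      rcases Stmt0Aux.mem_KminF.mp hS with rfl | rfl | ⟨i, rfl⟩
      · simp [Stmt0Aux.W]
      · exact Stmt0Aux.W_univ n v
      · simp [Stmt0Aux.W]
end
end

section
/- Let (N, K_min, v) be a minimal incomplete game with total excess Δ ≥ 0, and define the complete game v̄ by v̄(S) = v(S) for S ∈ K_min and v̄(S) = v(N) − Σ_{i∈N∖S} v({i}) for S ∉ K_min. Then v̄ is the upper game of the set of 1-convex extensions of v: every 1-convex extension w satisfies w(S) ≤ v̄(S) for all S ⊆ N, and for every S ⊆ N there exists a 1-convex extension w' with w'(S) = v̄(S). -/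
noncomputable section

open Finset

/-!
A 1-convex extension `w` satisfies `w({j}) ≤ b^w_j` (1-convexity at `{j}` plus
`b^w(N) ≥ w(N)`), so 1-convexity at `S` gives `w(S) ≤ v(N) - ∑_{j ∉ S} v({j}) = v̄(S)`.
For `S ∉ K_min` and `i ∈ S` the extreme game `v^i` attains this bound. It is the additive game
with weights `v({k}) + Δ·[k = i]`, lowered only on `K_min`; for `n ≥ 3` no coalition `N \ {j}`
lies in `K_min`, so the upper vector, and with it 1-convexity, survives the lowering.
-/

section OneConvexity

variable {n : ℕ}

lemma bvec_sum (a : Fin n → ℝ) (j : Fin n) :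
    bvec n (fun T => ∑ k ∈ T, a k) j = a j := by
  rw [bvec, ← sum_sdiff (subset_univ {j}), sum_singleton, add_sub_cancel_left]

lemma oneConvex_sum (a : Fin n → ℝ) : OneConvex n (fun T => ∑ k ∈ T, a k) := by
  simp only [OneConvex, bvec_sum]
  refine ⟨fun S _ => ?_, le_rfl⟩
  rw [← sum_sdiff (subset_univ S), add_sub_cancel_left]

lemma OneConvex.of_le {u w : Finset (Fin n) → ℝ} (hu : OneConvex n u) (hle : w ≤ u)
    (huniv : w univ = u univ) (hcoatom : ∀ j, w (univ \ {j}) = u (univ \ {j})) :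
    OneConvex n w := by
  have hb : bvec n w = bvec n u := funext fun j => by rw [bvec, bvec, huniv, hcoatom]
  refine ⟨fun S hS => ?_, ?_⟩ <;> rw [hb, huniv]
  · exact (hle S).trans (hu.1 S hS)
  · exact hu.2

lemma le_sub_sum_bvec_of_card_sdiff_le_one (w : Finset (Fin n) → ℝ) {S : Finset (Fin n)}
    (hS : #(univ \ S) ≤ 1) : w S ≤ w univ - ∑ i ∈ univ \ S, bvec n w i := by
  rcases Nat.le_one_iff_eq_zero_or_eq_one.mp hS with h | h
  · rw [card_eq_zero, sdiff_eq_empty_iff_subset, univ_subset_iff] at h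
    simp [h]
  · obtain ⟨j, hj⟩ := card_eq_one.mp h
    have hS : S = univ \ {j} := by rw [← hj, sdiff_sdiff_right_self, inf_eq_inter, univ_inter]
    rw [hj, sum_singleton, bvec, hS]
    simp

lemma le_bvec_of_le_sum {w : Finset (Fin n) → ℝ} {a : Fin n → ℝ}
    (hle : ∀ T, w T ≤ ∑ k ∈ T, a k) (huniv : w univ = ∑ k, a k) (j : Fin n) :
    a j ≤ bvec n w j := by
  rw [← bvec_sum a j, bvec, bvec, huniv]
  linarith [hle (univ \ {j})]

/-- With at most two players every nonempty coalition is `N` or some `N \ {j}`, where the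
1-convexity inequality is automatic. -/
lemma oneConvex_of_le_sum_of_le_two (hn : n ≤ 2) {w : Finset (Fin n) → ℝ} {a : Fin n → ℝ}
    (hle : ∀ T, w T ≤ ∑ k ∈ T, a k) (huniv : w univ = ∑ k, a k) : OneConvex n w := by
  refine ⟨fun S hS => le_sub_sum_bvec_of_card_sdiff_le_one w ?_, ?_⟩
  · rw [card_sdiff_of_subset (subset_univ S), card_univ, Fintype.card_fin]
    have := hS.card_pos
    omega
  · rw [huniv]
    exact sum_le_sum fun j _ => le_bvec_of_le_sum hle huniv j

lemma OneConvex.singleton_le_bvec {w : Finset (Fin n) → ℝ} (hw : OneConvex n w) (j : Fin n) :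
    w {j} ≤ bvec n w j := by
  have hj := hw.1 {j} (singleton_nonempty j)
  have hsum := hw.2
  rw [← sum_sdiff (subset_univ {j}), sum_singleton] at hsum
  linarith

lemma OneConvex.le_sub_sum_singleton {w : Finset (Fin n) → ℝ} (hw : OneConvex n w)
    {S : Finset (Fin n)} (hS : S.Nonempty) :
    w S ≤ w univ - ∑ j ∈ univ \ S, w {j} := by
  have := sum_le_sum fun j (_ : j ∈ univ \ S) => hw.singleton_le_bvec j
  linarith [hw.1 S hS]

end OneConvexity

section MinimalGame

variable {n : ℕ} {v : Finset (Fin n) → ℝ}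

lemma mem_KminF_iff {S : Finset (Fin n)} :
    S ∈ KminF n ↔ S = ∅ ∨ S = univ ∨ ∃ i, S = {i} := by
  simp [KminF, eq_comm]

lemma nonempty_of_not_mem_KminF {S : Finset (Fin n)} (hS : S ∉ KminF n) : S.Nonempty :=
  nonempty_iff_ne_empty.mpr fun h => hS (mem_KminF_iff.mpr (Or.inl h))

lemma sdiff_singleton_not_mem_KminF (hn : 3 ≤ n) (j : Fin n) : univ \ {j} ∉ KminF n := by
  have hcard : #(univ \ {j}) = n - 1 := by simp [card_sdiff_of_subset]
  rw [mem_KminF_iff]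
  rintro (h | h | ⟨i, h⟩)
  · rw [h, card_empty] at hcard; omega
  · exact (mem_sdiff.mp (h ▸ mem_univ j)).2 (mem_singleton_self j)
  · rw [h, card_singleton] at hcard; omega

lemma sub_sum_sdiff_singleton (S : Finset (Fin n)) :
    v univ - ∑ j ∈ univ \ S, v {j} = ∑ j ∈ S, v {j} + totalExcess n v := by
  rw [totalExcess, ← sum_sdiff (subset_univ S)]
  ring

lemma le_upperGameMin_of_mem_Cext {w : Finset (Fin n) → ℝ} (hw : w ∈ Cext n (KminF n) v)
    (S : Finset (Fin n)) : w S ≤ upperGameMin n v S := by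
  obtain ⟨-, hconv, hK⟩ := hw
  rw [upperGameMin]
  split_ifs with hS
  · exact (hK S hS).le
  · have hsingle : ∀ j, w {j} = v {j} := fun j =>
      hK _ (mem_KminF_iff.mpr (Or.inr (Or.inr ⟨j, rfl⟩)))
    simpa [hK univ (mem_KminF_iff.mpr (Or.inr (Or.inl rfl))), hsingle] using
      hconv.le_sub_sum_singleton (nonempty_of_not_mem_KminF hS)

def extGameWeight (n : ℕ) (v : Finset (Fin n) → ℝ) (i k : Fin n) : ℝ :=
  v {k} + if k = i then totalExcess n v else 0

lemma sum_extGameWeight (i : Fin n) (S : Finset (Fin n)) :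
    ∑ k ∈ S, extGameWeight n v i k =
      ∑ k ∈ S, v {k} + if i ∈ S then totalExcess n v else 0 := by
  simp only [extGameWeight, sum_add_distrib, sum_ite_eq']

lemma extGame_eq_sum_of_not_mem_KminF (i : Fin n) {S : Finset (Fin n)} (hS : S ∉ KminF n) :
    extGame n v i S = ∑ k ∈ S, extGameWeight n v i k := by
  rw [sum_extGameWeight, extGame, if_neg hS, sub_sum_sdiff_singleton]
  split_ifs <;> ring

lemma extGame_univ (i : Fin n) : extGame n v i univ = ∑ k, extGameWeight n v i k := by
  rw [sum_extGameWeight, if_pos (mem_univ i), extGame,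
    if_pos (mem_KminF_iff.mpr (Or.inr (Or.inl rfl))), totalExcess]
  ring

lemma extGame_le_sum (hv : v ∅ = 0) (hΔ : 0 ≤ totalExcess n v) (i : Fin n)
    (S : Finset (Fin n)) : extGame n v i S ≤ ∑ k ∈ S, extGameWeight n v i k := by
  by_cases hS : S ∈ KminF n
  · rcases mem_KminF_iff.mp hS with rfl | rfl | ⟨j, rfl⟩
    · simp [extGame, hS, hv]
    · exact (extGame_univ i).le
    · rw [extGame, if_pos hS, sum_singleton, extGameWeight]
      split_ifs <;> linarith
  · exact (extGame_eq_sum_of_not_mem_KminF i hS).le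

lemma extGame_mem_Cext (hv : v ∅ = 0) (hΔ : 0 ≤ totalExcess n v) (i : Fin n) :
    extGame n v i ∈ Cext n (KminF n) v := by
  refine ⟨by simp [extGame, mem_KminF_iff, hv], ?_, fun S hS => if_pos hS⟩
  by_cases hn : n ≤ 2
  · exact oneConvex_of_le_sum_of_le_two hn (extGame_le_sum hv hΔ i) (extGame_univ i)
  · exact (oneConvex_sum _).of_le (extGame_le_sum hv hΔ i) (extGame_univ i)
      fun j => extGame_eq_sum_of_not_mem_KminF i (sdiff_singleton_not_mem_KminF (by omega) j)

lemma Cext_KminF_nonempty (hv : v ∅ = 0) (hΔ : 0 ≤ totalExcess n v) :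
    (Cext n (KminF n) v).Nonempty := by
  rcases Nat.eq_zero_or_pos n with rfl | hn
  · refine ⟨v, hv, ⟨fun S hS => ?_, by simp [hv]⟩, fun _ _ => rfl⟩
    exact absurd hS (by simp [eq_empty_of_isEmpty S])
  · exact ⟨_, extGame_mem_Cext hv hΔ ⟨0, hn⟩⟩

end MinimalGame

/-- the game `v̄` is the upper game of the set of 1-convex
extensions of a minimal incomplete game with `Δ ≥ 0`. -/
theorem stmt_1 (n : ℕ) (v : Finset (Fin n) → ℝ) (hv : v ∅ = 0)
    (hΔ : 0 ≤ totalExcess n v) :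
    (∀ w ∈ Cext n (KminF n) v, ∀ S : Finset (Fin n), w S ≤ upperGameMin n v S) ∧
    (∀ S : Finset (Fin n), ∃ w ∈ Cext n (KminF n) v, w S = upperGameMin n v S) := by
  refine ⟨fun w hw S => le_upperGameMin_of_mem_Cext hw S, fun S => ?_⟩
  by_cases hS : S ∈ KminF n
  · obtain ⟨w, hw⟩ := Cext_KminF_nonempty hv hΔ
    exact ⟨w, hw, by rw [upperGameMin, if_pos hS, hw.2.2 S hS]⟩
  · obtain ⟨i, hi⟩ := nonempty_of_not_mem_KminF hS
    exact ⟨extGame n v i, extGame_mem_Cext hv hΔ i, by simp [extGame, upperGameMin, hS, hi]⟩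
end
end

section
/- Let (N, K_min, v) be a minimal incomplete game with total excess Δ ≥ 0 and n ≥ 3 players, let ṽ = (1/n) Σ_{i∈N} v^i be the centre of gravity of the extreme games and ẽ = (1/|E|) Σ_{T∈E} e_T the centre of gravity of the extreme rays, where E = 2^N ∖ ({∅, N} ∪ {{i} : i ∈ N} ∪ {N∖{i} : i ∈ N}). Then the conic τ-value satisfies τ_i(ṽ + ẽ) = v({i}) + Δ/n for every i ∈ N. -/
noncomputable section

open Finset

/-! The extreme rays `e_T` are supported on `E`, which avoids `N` and every `N ∖ {k}`, so `ẽ`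
does not change the upper vector. Among the extreme games only `v^k` is lowered by `Δ` on
`N ∖ {k}`, hence `b_k(ṽ) = v({k}) + Δ/n`. These sum to `v(N) = ṽ(N)`, so the gap of `ṽ + ẽ`
vanishes and its τ-value is its upper vector. -/

lemma tauVal_eq_bvec_of_gapF_univ_eq_zero {n : ℕ} {w : Finset (Fin n) → ℝ}
    (hw : gapF n w univ = 0) (i : Fin n) : tauVal n w i = bvec n w i := by
  simp [tauVal, hw]

lemma univ_mem_KminF (n : ℕ) : (univ : Finset (Fin n)) ∈ KminF n := by
  simp [KminF]

lemma univ_sdiff_singleton_notMem_KminF {n : ℕ} (hn : 3 ≤ n) (k : Fin n) :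
    univ \ {k} ∉ KminF n := by
  have hcard : (univ \ {k} : Finset (Fin n)).card = n - 1 := by
    rw [card_univ_sdiff, card_singleton, Fintype.card_fin]
  simp only [KminF, mem_union, mem_insert, mem_singleton, mem_image, mem_univ, true_and,
    not_or, not_exists]
  refine ⟨⟨fun h => ?_, fun h => ?_⟩, fun i h => ?_⟩
  · rw [h, card_empty] at hcard; omega
  · have hk : k ∈ univ \ {k} := by rw [h]; exact mem_univ k
    simp at hk
  · rw [← h, card_singleton] at hcard; omega

lemma tildeEMin_of_notMem {n : ℕ} {S : Finset (Fin n)} (hS : S ∉ ESetMin n) :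
    tildeEMin n S = 0 := by
  refine div_eq_zero_iff.mpr (Or.inl (sum_eq_zero fun T hT => if_neg ?_))
  rintro rfl
  exact hS hT

lemma univ_notMem_ESetMin (n : ℕ) : (univ : Finset (Fin n)) ∉ ESetMin n := by
  simp [ESetMin, univ_mem_KminF]

lemma univ_sdiff_singleton_notMem_ESetMin {n : ℕ} (k : Fin n) :
    univ \ {k} ∉ ESetMin n := by
  simp only [ESetMin, mem_sdiff, mem_union, mem_image, mem_univ, true_and, not_not]
  exact Or.inr ⟨k, rfl⟩

lemma tildeV_of_mem_KminF {n : ℕ} (hn : n ≠ 0) (v : Finset (Fin n) → ℝ) {S : Finset (Fin n)}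
    (hS : S ∈ KminF n) : tildeV n v S = v S := by
  simp [tildeV, extGame, hS, hn]

lemma extGame_univ_sdiff_singleton {n : ℕ} (hn : 3 ≤ n) (v : Finset (Fin n) → ℝ) (i k : Fin n) :
    extGame n v i (univ \ {k}) =
      v univ - v {k} - if i = k then totalExcess n v else 0 := by
  have hcompl : univ \ (univ \ {k}) = ({k} : Finset (Fin n)) := by simp
  rw [extGame, if_neg (univ_sdiff_singleton_notMem_KminF hn k), hcompl, sum_singleton]
  by_cases h : i = k <;> simp [h]

lemma tildeV_univ_sdiff_singleton {n : ℕ} (hn : 3 ≤ n) (v : Finset (Fin n) → ℝ) (k : Fin n) :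
    tildeV n v (univ \ {k}) = v univ - v {k} - totalExcess n v / n := by
  have hn0 : (n : ℝ) ≠ 0 := by positivity
  simp only [tildeV, extGame_univ_sdiff_singleton hn, sum_sub_distrib, sum_ite_eq',
    mem_univ, if_true, sum_const, card_univ, Fintype.card_fin, nsmul_eq_mul]
  field_simp

lemma bvec_tildeV_add_tildeEMin {n : ℕ} (hn : 3 ≤ n) (v : Finset (Fin n) → ℝ) (k : Fin n) :
    bvec n (fun S => tildeV n v S + tildeEMin n S) k = v {k} + totalExcess n v / n := by
  rw [bvec, tildeV_of_mem_KminF (by omega) v (univ_mem_KminF n),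
    tildeEMin_of_notMem (univ_notMem_ESetMin n), tildeV_univ_sdiff_singleton hn,
    tildeEMin_of_notMem (univ_sdiff_singleton_notMem_ESetMin k)]
  ring

lemma gapF_tildeV_add_tildeEMin_univ {n : ℕ} (hn : 3 ≤ n) (v : Finset (Fin n) → ℝ) :
    gapF n (fun S => tildeV n v S + tildeEMin n S) univ = 0 := by
  have hn0 : (n : ℝ) ≠ 0 := by positivity
  rw [gapF, sum_congr rfl fun k _ => bvec_tildeV_add_tildeEMin hn v k, sum_add_distrib,
    sum_const, card_univ, Fintype.card_fin, nsmul_eq_mul,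
    tildeV_of_mem_KminF (by omega) v (univ_mem_KminF n),
    tildeEMin_of_notMem (univ_notMem_ESetMin n), totalExcess]
  field_simp
  ring

theorem stmt_7_general (n : ℕ) (hn : 3 ≤ n) (v : Finset (Fin n) → ℝ) :
    ∀ i : Fin n,
      tauVal n (fun S => tildeV n v S + tildeEMin n S) i =
        v {i} + totalExcess n v / (n : ℝ) := by
  intro i
  rw [tauVal_eq_bvec_of_gapF_univ_eq_zero (gapF_tildeV_add_tildeEMin_univ hn v),
    bvec_tildeV_add_tildeEMin hn]

/-- the conic τ-value of a minimal incomplete game with `Δ ≥ 0`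
and `n ≥ 3` players satisfies `τ_i(ṽ + ẽ) = v({i}) + Δ/n`. -/
theorem stmt_7 (n : ℕ) (hn : 3 ≤ n) (v : Finset (Fin n) → ℝ) (hv : v ∅ = 0)
    (hΔ : 0 ≤ totalExcess n v) :
    ∀ i : Fin n,
      tauVal n (fun S => tildeV n v S + tildeEMin n S) i =
        v {i} + totalExcess n v / (n : ℝ) :=
  stmt_7_general n hn v
end
end

section
/- The average value ζ̃, defined by ζ̃_i(v) = v({i}) + Δ/n, is the unique function f from the class of 1-convex-extendable minimal incomplete games on N to ℝ^n satisfying, for every such game v: (1) efficiency: Σ_{i∈N} f_i(v) = v(N); (2) elementary symmetry: for all i, j ∈ N with i ≠ j, v({i}) = v({j}) implies f_i(v) = f_j(v); (3) zero-normalisation invariance: f_i(v) = v({i}) + f_i(v_0) for all i ∈ N, where v_0 is the zero-normalised game of v. -/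
noncomputable section

open Finset

/-- The axioms of Theorem `thm:ave-value-axiom1`: efficiency, elementary
symmetry, and zero-normalisation invariance. -/
def AvAxioms1 (n : ℕ) (f : (Finset (Fin n) → ℝ) → Fin n → ℝ) : Prop :=
  (∀ v, MinExtendable n v → ∑ i : Fin n, f v i = v Finset.univ) ∧
  (∀ v, MinExtendable n v → ∀ i j : Fin n, i ≠ j → v {i} = v {j} →
    f v i = f v j) ∧
  (∀ v, MinExtendable n v → ∀ i : Fin n, f v i = v {i} + f (zeroNorm n v) i)

/- All singletons of the zero-normalised game `v₀` are worth `0`, so by elementary symmetry and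
efficiency any admissible value pays `Δ / n` to every player in `v₀`; zero-normalisation
invariance then forces `f v i = v {i} + Δ / n`. -/

section

variable {n : ℕ}

/-- For `n = 1` the singleton is the grand coalition, but then `Δ = 0`. -/
lemma zeroNorm_singleton (v : Finset (Fin n) → ℝ) (i : Fin n) : zeroNorm n v {i} = 0 := by
  unfold zeroNorm
  split_ifs with h
  · rw [totalExcess, ← h, sum_singleton, sub_self]
  · rfl

lemma zeroNorm_univ (v : Finset (Fin n) → ℝ) : zeroNorm n v univ = totalExcess n v :=
  if_pos rfl

lemma totalExcess_zeroNorm (v : Finset (Fin n) → ℝ) :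
    totalExcess n (zeroNorm n v) = totalExcess n v := by
  simp only [totalExcess, zeroNorm_univ, zeroNorm_singleton, sum_const_zero, sub_zero]

lemma MinExtendable.zeroNorm (hn : 0 < n) {v : Finset (Fin n) → ℝ} (hv : MinExtendable n v) :
    MinExtendable n (zeroNorm n v) := by
  have : (∅ : Finset (Fin n)) ≠ univ := (univ_nonempty_iff.2 ⟨⟨0, hn⟩⟩).ne_empty.symm
  exact ⟨if_neg this, (totalExcess_zeroNorm v).symm ▸ hv.2⟩

lemma sum_avgValue (hn : 0 < n) (v : Finset (Fin n) → ℝ) :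
    ∑ i, avgValue n v i = v univ := by
  have : (n : ℝ) ≠ 0 := Nat.cast_ne_zero.2 hn.ne'
  simp only [avgValue, sum_add_distrib, sum_const, card_univ, Fintype.card_fin, nsmul_eq_mul,
    mul_div_cancel₀ _ this, totalExcess]
  ring

lemma avgValue_axioms (hn : 0 < n) : AvAxioms1 n (avgValue n) := by
  refine ⟨fun v _ => sum_avgValue hn v, fun v _ i j _ hij => by rw [avgValue, avgValue, hij],
    fun v _ i => ?_⟩
  rw [avgValue, avgValue, zeroNorm_singleton, totalExcess_zeroNorm, zero_add]

lemma AvAxioms1.apply_zeroNorm (hn : 0 < n) {f : (Finset (Fin n) → ℝ) → Fin n → ℝ}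
    (hf : AvAxioms1 n f) {v : Finset (Fin n) → ℝ} (hv : MinExtendable n v) (i : Fin n) :
    f (zeroNorm n v) i = totalExcess n v / n := by
  obtain ⟨hEff, hSymm, -⟩ := hf
  have hv₀ := hv.zeroNorm hn
  have hconst : ∀ j, f (zeroNorm n v) j = f (zeroNorm n v) i := fun j => by
    rcases eq_or_ne j i with rfl | hji
    · rfl
    · exact hSymm _ hv₀ j i hji (by rw [zeroNorm_singleton, zeroNorm_singleton])
  have hsum := hEff _ hv₀
  rw [sum_congr rfl fun j _ => hconst j, sum_const, card_univ, Fintype.card_fin, nsmul_eq_mul,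
    zeroNorm_univ] at hsum
  rw [← hsum, mul_div_cancel_left₀ _ (Nat.cast_ne_zero.2 hn.ne')]

lemma AvAxioms1.eq_avgValue (hn : 0 < n) {f : (Finset (Fin n) → ℝ) → Fin n → ℝ}
    (hf : AvAxioms1 n f) {v : Finset (Fin n) → ℝ} (hv : MinExtendable n v) (i : Fin n) :
    f v i = avgValue n v i := by
  rw [hf.2.2 v hv i, hf.apply_zeroNorm hn hv i, avgValue]

end

/-- the average value `ζ̃_i(v) = v({i}) + Δ/n` is the unique value
on 1-convex-extendable minimal incomplete games satisfying efficiency,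
elementary symmetry and zero-normalisation invariance. -/
theorem stmt_11 (n : ℕ) (hn : 0 < n) :
    AvAxioms1 n (avgValue n) ∧
    ∀ f : (Finset (Fin n) → ℝ) → Fin n → ℝ, AvAxioms1 n f →
      ∀ v, MinExtendable n v → ∀ i : Fin n, f v i = avgValue n v i :=
  ⟨avgValue_axioms hn, fun _ hf _ hv i => hf.eq_avgValue hn hv i⟩
end
end

section
/- Let (N, K, v) be an incomplete game with defined upper vector, i.e., ∅ ∈ K, {N} ∪ {N∖{i} : i ∈ N} ⊆ K ⊆ 2^N, v : K → ℝ, v(∅) = 0, and let b ∈ ℝ^n with b_i = v(N) − v(N∖{i}). Then (N, K, v) admits a 1-convex extension if and only if v(S) ≤ v(N) − Σ_{i∈N∖S} b_i for every nonempty S ∈ K, and Σ_{i∈N} b_i ≥ v(N). -/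
noncomputable section

open Finset

/-- an incomplete game with defined upper vector is
1-convex-extendable iff `v(S) ≤ v(N) - b(N∖S)` for every nonempty `S ∈ K`
and `b(N) ≥ v(N)`. -/
theorem stmt_14 (n : ℕ) (K : Finset (Finset (Fin n))) (v : Finset (Fin n) → ℝ)
    (hK0 : ∅ ∈ K) (hKN : Finset.univ ∈ K)
    (hKi : ∀ i : Fin n, Finset.univ \ {i} ∈ K) (hv : v ∅ = 0) :
    (Cext n K v).Nonempty ↔
      ((∀ S ∈ K, S.Nonempty →
          v S ≤ v Finset.univ - ∑ i ∈ Finset.univ \ S, bvec n v i) ∧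
        v Finset.univ ≤ ∑ i : Fin n, bvec n v i) := by
  constructor
  · rintro ⟨w, hw0, ⟨h1, h2⟩, hwv⟩
    have hb : ∀ i, bvec n w i = bvec n v i := by
      intro i
      simp [bvec, hwv _ hKN, hwv _ (hKi i)]
    constructor
    · intro S hS hSne
      have := h1 S hSne
      rw [hwv _ hS, hwv _ hKN] at this
      simpa [hb] using this
    · have := h2
      rw [hwv _ hKN] at this
      simpa [hb] using this
  · rintro ⟨h1, h2⟩
    refine ⟨upperGameK n K v, ?_, ⟨?_, ?_⟩, ?_⟩
    · simp [upperGameK, hK0, hv]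
    · intro S hSne
      have hb : ∀ i, bvec n (upperGameK n K v) i = bvec n v i := by
        intro i
        simp [bvec, upperGameK, hKN, hKi i]
      by_cases hS : S ∈ K
      · have := h1 S hS hSne
        simpa [upperGameK, hS, hKN, hb] using this
      · simp [upperGameK, hS, hKN, hb, bvec]
    · have hb : ∀ i, bvec n (upperGameK n K v) i = bvec n v i := by
        intro i
        simp [bvec, upperGameK, hKN, hKi i]
      simpa [upperGameK, hKN, hb] using h2
    · intro S hS
      simp [upperGameK, hS]
end
end

section
/- Let (N, K, v) be a 1-convex-extendable incomplete game with defined upper vector and define v̄ by v̄(S) = v(S) for S ∈ K and v̄(S) = v(N) − Σ_{i∈N∖S} b_i for S ∉ K, where b_i = v(N) − v(N∖{i}). Then v̄ is the unique extreme point of the set C(v) of 1-convex extensions of v; that is, v̄ ∈ C(v), for every x : 2^N → ℝ, v̄ + x ∈ C(v) and v̄ − x ∈ C(v) imply x = 0, and no other element of C(v) has this property. -/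
noncomputable section

open Finset

lemma cext_facts (n : ℕ) (K : Finset (Finset (Fin n))) (v : Finset (Fin n) → ℝ)
    (hKN : Finset.univ ∈ K) (hKi : ∀ i : Fin n, Finset.univ \ {i} ∈ K)
    (u : Finset (Fin n) → ℝ) (hu : u ∈ Cext n K v) :
    (∀ i, bvec n u i = bvec n v i) ∧
    u Finset.univ = v Finset.univ ∧
    (∀ S : Finset (Fin n), S.Nonempty →
      u S ≤ v Finset.univ - ∑ i ∈ Finset.univ \ S, bvec n v i) ∧
    v Finset.univ ≤ ∑ i : Fin n, bvec n v i := by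
  obtain ⟨hu0, ⟨hu1, hu2⟩, huK⟩ := hu
  have hN : u Finset.univ = v Finset.univ := huK _ hKN
  have hb : ∀ i, bvec n u i = bvec n v i := by
    intro i; unfold bvec; rw [hN, huK _ (hKi i)]
  refine ⟨hb, hN, ?_, ?_⟩
  · intro S hS
    have h := hu1 S hS
    rwa [hN, Finset.sum_congr rfl (fun i _ => hb i)] at h
  · have h := hu2
    rwa [hN, Finset.sum_congr rfl (fun i _ => hb i)] at h

/-- for a 1-convex-extendable incomplete game with defined upper
vector, the upper game `v̄` is the unique extreme point of the set of its
1-convex extensions. -/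
theorem stmt_15 (n : ℕ) (K : Finset (Finset (Fin n))) (v : Finset (Fin n) → ℝ)
    (hK0 : ∅ ∈ K) (hKN : Finset.univ ∈ K)
    (hKi : ∀ i : Fin n, Finset.univ \ {i} ∈ K) (hv : v ∅ = 0)
    (hext : (Cext n K v).Nonempty) :
    upperGameK n K v ∈ Cext n K v ∧
    (∀ x : Finset (Fin n) → ℝ,
      (fun S => upperGameK n K v S + x S) ∈ Cext n K v →
      (fun S => upperGameK n K v S - x S) ∈ Cext n K v → x = 0) ∧
    (∀ y ∈ Cext n K v,
      (∀ x : Finset (Fin n) → ℝ,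
        (fun S => y S + x S) ∈ Cext n K v →
        (fun S => y S - x S) ∈ Cext n K v → x = 0) →
      y = upperGameK n K v) := by
  obtain ⟨w, hw⟩ := hext
  obtain ⟨-, -, hub, hsumge⟩ := cext_facts n K v hKN hKi w hw
  set vb := upperGameK n K v with hvb
  have hbarK : ∀ S ∈ K, vb S = v S := fun S hS => if_pos hS
  have hbarNK : ∀ S : Finset (Fin n), S ∉ K →
      vb S = v Finset.univ - ∑ i ∈ Finset.univ \ S, bvec n v i :=
    fun S hS => if_neg hS
  have hbarN : vb Finset.univ = v Finset.univ := hbarK _ hKN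
  have hbarb : ∀ i, bvec n vb i = bvec n v i := by
    intro i; unfold bvec; rw [hbarN, hbarK _ (hKi i)]
  have mem1 : vb ∈ Cext n K v := by
    refine ⟨by rw [hbarK _ hK0, hv], ⟨?_, ?_⟩, hbarK⟩
    · intro S hS
      rw [hbarN, Finset.sum_congr rfl (fun i _ => hbarb i)]
      by_cases hSK : S ∈ K
      · rw [hbarK _ hSK]
        have h := hub S hS
        obtain ⟨-, -, huK⟩ := hw
        rwa [huK _ hSK] at h
      · rw [hbarNK _ hSK]
    · rw [hbarN, Finset.sum_congr rfl (fun i _ => hbarb i)]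
      exact hsumge
  refine ⟨mem1, ?_, ?_⟩
  · intro x hp hm
    obtain ⟨-, -, hpb, -⟩ := cext_facts n K v hKN hKi _ hp
    obtain ⟨-, -, hmb, -⟩ := cext_facts n K v hKN hKi _ hm
    obtain ⟨-, -, hpK⟩ := hp
    funext S
    by_cases hSK : S ∈ K
    · have := hpK S hSK
      simp only at this
      have := hbarK S hSK
      have h1 := hpK S hSK
      simp only at h1
      rw [hbarK S hSK] at h1
      simp only [Pi.zero_apply]
      linarith [h1]
    · have hSne : S.Nonempty := by
        rw [Finset.nonempty_iff_ne_empty]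
        rintro rfl; exact hSK hK0
      have h1 := hpb S hSne
      have h2 := hmb S hSne
      rw [hbarNK S hSK] at h1 h2
      have : x S ≤ 0 := by linarith
      have : 0 ≤ x S := by linarith
      simp only [Pi.zero_apply]
      linarith
  · intro y hy hext
    have hy' := hy
    obtain ⟨hy0, ⟨hy1, hy2⟩, hyK⟩ := hy'
    obtain ⟨hyb, hyN, hyub, -⟩ := cext_facts n K v hKN hKi y hy
    set x : Finset (Fin n) → ℝ := fun S => vb S - y S with hx
    have hp : (fun S => y S + x S) ∈ Cext n K v := by
      have : (fun S => y S + x S) = vb := by funext S; simp [hx]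
      rw [this]; exact mem1
    have hm : (fun S => y S - x S) ∈ Cext n K v := by
      set z : Finset (Fin n) → ℝ := fun S => y S - x S with hz
      have hzK : ∀ S ∈ K, z S = v S := by
        intro S hS
        simp only [hz, hx]
        rw [hbarK S hS, hyK S hS]; ring
      have hzN : z Finset.univ = v Finset.univ := hzK _ hKN
      have hzb : ∀ i, bvec n z i = bvec n v i := by
        intro i; unfold bvec; rw [hzN, hzK _ (hKi i)]
      refine ⟨by rw [hzK _ hK0, hv], ⟨?_, ?_⟩, hzK⟩
      · intro S hS
        rw [hzN, Finset.sum_congr rfl (fun i _ => hzb i)]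
        by_cases hSK : S ∈ K
        · rw [hzK _ hSK]
          have h := hyub S hS
          rwa [hyK _ hSK] at h
        · have h1 := hyub S hS
          have h2 := hbarNK S hSK
          simp only [hz, hx]
          linarith
      · rw [hzN, Finset.sum_congr rfl (fun i _ => hzb i)]
        exact hsumge
    have hx0 := hext x hp hm
    funext S
    have := congrFun hx0 S
    simp only [hx, Pi.zero_apply] at this
    linarith
end
end

section
/- Let (N, K, v) be a 1-convex-extendable incomplete game with defined upper vector, let v̄ be defined by v̄(S) = v(S) for S ∈ K and v̄(S) = v(N) − Σ_{i∈N∖S} b_i for S ∉ K (where b_i = v(N) − v(N∖{i})), and for each T ∉ K let e_T be the game with e_T(S) = −1 if S = T and e_T(S) = 0 otherwise. Then the set of 1-convex extensions of v equals { v̄ + Σ_{T∉K} α_T e_T : α_T ≥ 0 for all T ∉ K }. -/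
noncomputable section

open Finset

lemma sum_eRay_aux (n : ℕ) (K : Finset (Finset (Fin n))) (α : Finset (Fin n) → ℝ)
    (S : Finset (Fin n)) :
    ∑ T ∈ Finset.univ \ K, α T * eRay n T S = if S ∈ K then 0 else -α S := by
  have h : ∀ T ∈ Finset.univ \ K, α T * eRay n T S = if S = T then -α T else 0 := by
    intro T _; unfold eRay; split <;> ring
  rw [Finset.sum_congr rfl h, Finset.sum_ite_eq]
  by_cases hS : S ∈ K <;> simp [hS]

/-- for a 1-convex-extendable incomplete game with defined upper
vector, the set of 1-convex extensions is `{ v̄ + ∑_{T ∉ K} α_T e_T : α_T ≥ 0 }`. -/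
theorem stmt_16 (n : ℕ) (K : Finset (Finset (Fin n))) (v : Finset (Fin n) → ℝ)
    (hK0 : ∅ ∈ K) (hKN : Finset.univ ∈ K)
    (hKi : ∀ i : Fin n, Finset.univ \ {i} ∈ K) (hv : v ∅ = 0)
    (hext : (Cext n K v).Nonempty) :
    Cext n K v =
      {w | ∃ α : Finset (Fin n) → ℝ,
        (∀ T ∈ Finset.univ \ K, 0 ≤ α T) ∧
        w = fun S => upperGameK n K v S +
          ∑ T ∈ Finset.univ \ K, α T * eRay n T S} := by
  obtain ⟨u, hu0, ⟨hu1, hu2⟩, huK⟩ := hext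
  have hbu : ∀ i, bvec n u i = bvec n v i := by
    intro i; unfold bvec; rw [huK _ hKN, huK _ (hKi i)]
  have huN : u Finset.univ = v Finset.univ := huK _ hKN
  have keyK : ∀ S : Finset (Fin n), S.Nonempty → S ∈ K →
      v S ≤ v Finset.univ - ∑ i ∈ Finset.univ \ S, bvec n v i := by
    intro S hS hSK
    have := hu1 S hS
    rw [huN, Finset.sum_congr rfl (fun i _ => hbu i), huK S hSK] at this
    exact this
  have hΔ : v Finset.univ ≤ ∑ i : Fin n, bvec n v i := by
    have := hu2
    rw [huN, Finset.sum_congr rfl (fun i _ => hbu i)] at this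
    exact this
  ext w
  constructor
  · rintro ⟨hw0, ⟨hw1, hw2⟩, hwK⟩
    have hbw : ∀ i, bvec n w i = bvec n v i := by
      intro i; unfold bvec; rw [hwK _ hKN, hwK _ (hKi i)]
    have hwN : w Finset.univ = v Finset.univ := hwK _ hKN
    refine ⟨fun T => upperGameK n K v T - w T, ?_, ?_⟩
    · intro T hT
      have hTK : T ∉ K := (Finset.mem_sdiff.mp hT).2
      have hTne : T.Nonempty := by
        rcases Finset.eq_empty_or_nonempty T with h | h
        · exact absurd (h ▸ hK0) hTK
        · exact h
      have := hw1 T hTne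
      rw [hwN, Finset.sum_congr rfl (fun i _ => hbw i)] at this
      unfold upperGameK
      beta_reduce
      rw [if_neg hTK]
      linarith
    · funext S
      rw [sum_eRay_aux]
      by_cases hS : S ∈ K
      · rw [if_pos hS, hwK S hS]; unfold upperGameK; rw [if_pos hS]; ring
      · rw [if_neg hS]; ring
  · rintro ⟨α, hα, rfl⟩
    have hval : ∀ S ∈ K,
        upperGameK n K v S + ∑ T ∈ Finset.univ \ K, α T * eRay n T S = v S := by
      intro S hS
      rw [sum_eRay_aux, if_pos hS]
      unfold upperGameK
      rw [if_pos hS]; ring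
    have hbw : ∀ i, bvec n (fun S => upperGameK n K v S +
        ∑ T ∈ Finset.univ \ K, α T * eRay n T S) i = bvec n v i := by
      intro i; unfold bvec; beta_reduce
      rw [hval _ hKN, hval _ (hKi i)]
    refine ⟨?_, ⟨?_, ?_⟩, hval⟩
    · beta_reduce; rw [hval _ hK0, hv]
    · intro S hSne
      beta_reduce
      rw [hval _ hKN, Finset.sum_congr rfl (fun i (_ : i ∈ Finset.univ \ S) => hbw i)]
      by_cases hS : S ∈ K
      · rw [hval S hS]; exact keyK S hSne hS
      · rw [sum_eRay_aux, if_neg hS]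
        unfold upperGameK
        rw [if_neg hS]
        have := hα S (Finset.mem_sdiff.mpr ⟨Finset.mem_univ S, hS⟩)
        linarith
    · beta_reduce
      rw [hval _ hKN, Finset.sum_congr rfl (fun i _ => hbw i)]
      exact hΔ
end
end
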